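/- Fix integers a ≥ 1 and b ≥ 1. Then R_n^{(a,b,0,0)}(x) = n! for all n ≤ a+b, and for every s ≥ 1, R_{a+b+s}^{(a,b,0,0)}(x) = (a+b)! · Π_{i=1}^{s} ((a+b) + i·x). -/

import Mathlib

/-- Number of points in quadrant I relative to `(i, σ i)`. -/
def quad1 {n : ℕ} (σ : Equiv.Perm (Fin n)) (i : Fin n) : ℕ :=
  (Finset.univ.filter (fun j => i < j ∧ σ i < σ j)).card

/-- Number of points in quadrant II relative to `(i, σ i)`. -/
def quad2 {n : ℕ} (σ : Equiv.Perm (Fin n)) (i : Fin n) : ℕ :=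
  (Finset.univ.filter (fun j => j < i ∧ σ i < σ j)).card

/-- `mmp^{(a,b,0,0)}(σ)`: the number of indices `i` with at least `a` points
in quadrant I and at least `b` points in quadrant II relative to `(i, σ i)`. -/
def mmpAB {n : ℕ} (a b : ℕ) (σ : Equiv.Perm (Fin n)) : ℕ :=
  (Finset.univ.filter (fun i => a ≤ quad1 σ i ∧ b ≤ quad2 σ i)).card

/-- `R_n^{(a,b,0,0)}(x) = Σ_{σ ∈ S_n} x^{mmp^{(a,b,0,0)}(σ)}`. -/
noncomputable def R (a b n : ℕ) : Polynomial ℤ :=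
  ∑ σ : Equiv.Perm (Fin n), Polynomial.X ^ mmpAB a b σ


/-!
Every permutation of `Fin (n + 1)` arises in exactly one way by inserting a new smallest value
at some position `p` into a permutation of `Fin n`. The new point lies below all the others, so
it does not change their quadrant I and II counts; and it has `n - p` points in quadrant I and
`p` in quadrant II, so it matches `MMP(a,b,0,0)` iff `b ≤ p ≤ n - a`. There are `n + 1 - (a + b)`
such positions, whence `R (n + 1) = R n * (min (n + 1) (a + b) + (n + 1 - (a + b)) x)`, and the
theorem follows by induction on `n`.
-/

open Finset Polynomial

namespace Equiv.Perm

/-- The permutation of `Fin (n + 1)` sending `p` to `0` whose values at the other positions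
are those of `τ`, shifted up by one. -/
def insertMin {n : ℕ} (p : Fin (n + 1)) (τ : Perm (Fin n)) : Perm (Fin (n + 1)) :=
  (finSuccEquiv' p).trans (τ.optionCongr.trans (finSuccEquiv' 0).symm)

variable {n : ℕ} (p : Fin (n + 1)) (τ : Perm (Fin n))

@[simp]
lemma insertMin_apply_self : insertMin p τ p = 0 := by
  simp [insertMin]

@[simp]
lemma insertMin_apply_succAbove (i : Fin n) : insertMin p τ (p.succAbove i) = (τ i).succ := by
  simp [insertMin, Fin.zero_succAbove]

lemma insertMin_bijective :
    Function.Bijective (fun x : Perm (Fin n) × Fin (n + 1) => insertMin x.2 x.1) := by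
  refine (Fintype.bijective_iff_injective_and_card _).mpr ⟨?_, ?_⟩
  · rintro ⟨τ, p⟩ ⟨τ', p'⟩ h
    simp only at h
    have hp : insertMin p' τ' p = 0 := h ▸ insertMin_apply_self p τ
    obtain rfl : p = p' := (insertMin p' τ').injective (hp.trans (insertMin_apply_self p' τ').symm)
    have hτ : τ = τ' := Equiv.ext fun i =>
      Fin.succ_injective _ <| by simpa using congrArg (· (p.succAbove i)) h
    rw [hτ]
  · simp [Fintype.card_perm, Nat.factorial_succ, mul_comm]

end Equiv.Perm

open Equiv.Perm

section Quadrants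

variable {n : ℕ}

lemma quad1_of_apply_eq_zero {σ : Equiv.Perm (Fin (n + 1))} {i : Fin (n + 1)} (h : σ i = 0) :
    quad1 σ i = n - i := by
  rw [quad1, show n - i = n + 1 - 1 - i by omega, ← Fin.card_Ioi]
  congr 1
  ext j
  simp only [mem_filter, mem_univ, true_and, mem_Ioi, h]
  refine ⟨And.left, fun hj => ⟨hj, Fin.pos_of_ne_zero fun hj0 => hj.ne' ?_⟩⟩
  exact σ.injective (hj0.trans h.symm)

lemma quad2_of_apply_eq_zero {σ : Equiv.Perm (Fin (n + 1))} {i : Fin (n + 1)} (h : σ i = 0) :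
    quad2 σ i = i := by
  rw [quad2, ← Fin.card_Iio]
  congr 1
  ext j
  simp only [mem_filter, mem_univ, true_and, mem_Iio, h]
  refine ⟨And.left, fun hj => ⟨hj, Fin.pos_of_ne_zero fun hj0 => hj.ne ?_⟩⟩
  exact σ.injective (hj0.trans h.symm)

variable (p : Fin (n + 1)) (τ : Equiv.Perm (Fin n))

lemma card_filter_insertMin_lt (i : Fin n) (r : Fin (n + 1) → Prop) [DecidablePred r] :
    #{j | r j ∧ insertMin p τ (p.succAbove i) < insertMin p τ j}
      = #{k | r (p.succAbove k) ∧ τ i < τ k} := by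
  simp only [card_filter, Fin.sum_univ_succAbove _ p, insertMin_apply_self, Fin.not_lt_zero,
    and_false, if_false, zero_add, insertMin_apply_succAbove, Fin.succ_lt_succ_iff]

lemma quad1_insertMin_succAbove (i : Fin n) :
    quad1 (insertMin p τ) (p.succAbove i) = quad1 τ i := by
  simp only [quad1, card_filter_insertMin_lt, Fin.succAbove_lt_succAbove_iff]

lemma quad2_insertMin_succAbove (i : Fin n) :
    quad2 (insertMin p τ) (p.succAbove i) = quad2 τ i := by
  simp only [quad2, card_filter_insertMin_lt, Fin.succAbove_lt_succAbove_iff]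

lemma mmpAB_insertMin (a b : ℕ) :
    mmpAB a b (insertMin p τ) = mmpAB a b τ + if b ≤ (p : ℕ) ∧ a ≤ n - p then 1 else 0 := by
  have hq1 := quad1_of_apply_eq_zero (insertMin_apply_self p τ)
  have hq2 := quad2_of_apply_eq_zero (insertMin_apply_self p τ)
  simp only [mmpAB, card_filter, Fin.sum_univ_succAbove _ p, hq1, hq2,
    quad1_insertMin_succAbove, quad2_insertMin_succAbove, and_comm, add_comm]

end Quadrants

lemma card_filter_le_val_and_le_sub (a b n : ℕ) :
    #{p : Fin (n + 1) | b ≤ (p : ℕ) ∧ a ≤ n - p} = n + 1 - (a + b) := by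
  rw [card_filter, Fin.sum_univ_eq_sum_range (fun m => if b ≤ m ∧ a ≤ n - m then 1 else 0),
    ← card_filter]
  have h : {m ∈ range (n + 1) | b ≤ m ∧ a ≤ n - m} = Ico b (n + 1 - a) := by
    ext m
    simp only [mem_filter, mem_range, mem_Ico]
    omega
  rw [h, Nat.card_Ico]
  omega

lemma R_succ (a b n : ℕ) :
    R a b (n + 1) =
      R a b n * (((min (n + 1) (a + b) : ℕ) : ℤ[X]) + ((n + 1 - (a + b) : ℕ) : ℤ[X]) * X) := by
  have hpos : ∑ p : Fin (n + 1), (X : ℤ[X]) ^ (if b ≤ (p : ℕ) ∧ a ≤ n - p then 1 else 0)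
      = ((min (n + 1) (a + b) : ℕ) : ℤ[X]) + ((n + 1 - (a + b) : ℕ) : ℤ[X]) * X := by
    have hcard := card_filter_add_card_filter_not (s := (univ : Finset (Fin (n + 1))))
      (fun p : Fin (n + 1) => b ≤ (p : ℕ) ∧ a ≤ n - p)
    rw [card_filter_le_val_and_le_sub, card_univ, Fintype.card_fin] at hcard
    simp only [pow_ite, pow_one, pow_zero, sum_ite, sum_const, nsmul_eq_mul, mul_one,
      card_filter_le_val_and_le_sub]
    rw [add_comm]
    congr 3
    omega
  unfold R
  rw [← Fintype.sum_bijective _ insertMin_bijective _ _ fun _ => rfl, Fintype.sum_prod_type,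
    ← hpos, sum_mul_sum]
  simp only [mmpAB_insertMin, pow_add]

theorem stmt_4_general (a b : ℕ) :
    (∀ n, n ≤ a + b → R a b n = (Nat.factorial n : Polynomial ℤ)) ∧
    (∀ s, 1 ≤ s → R a b (a + b + s) =
      (Nat.factorial (a + b) : Polynomial ℤ) *
        ∏ i ∈ Finset.Icc 1 s,
          (((a + b : ℕ) : Polynomial ℤ) + (i : Polynomial ℤ) * Polynomial.X)) := by
  have small : ∀ n, n ≤ a + b → R a b n = (Nat.factorial n : ℤ[X]) := by
    intro n hn
    induction n with
    | zero => simp [R, mmpAB]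
    | succ n ih =>
      rw [R_succ, ih (by omega), min_eq_left hn, Nat.sub_eq_zero_of_le hn, Nat.factorial_succ]
      push_cast
      ring
  have large : ∀ s, R a b (a + b + s) = (Nat.factorial (a + b) : ℤ[X]) *
      ∏ i ∈ Icc 1 s, (((a + b : ℕ) : ℤ[X]) + (i : ℤ[X]) * X) := by
    intro s
    induction s with
    | zero => simp [small (a + b) le_rfl]
    | succ s ih =>
      rw [← add_assoc, R_succ, ih, min_eq_right (by omega), prod_Icc_succ_top (by omega),
        show a + b + s + 1 - (a + b) = s + 1 by omega]
      push_cast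
      ring
  exact ⟨small, fun s _ => large s⟩

theorem stmt_4 (a b : ℕ) (ha : 1 ≤ a) (hb : 1 ≤ b) :
    (∀ n, n ≤ a + b → R a b n = (Nat.factorial n : Polynomial ℤ)) ∧
    (∀ s, 1 ≤ s → R a b (a + b + s) =
      (Nat.factorial (a + b) : Polynomial ℤ) *
        ∏ i ∈ Finset.Icc 1 s,
          (((a + b : ℕ) : Polynomial ℤ) + (i : Polynomial ℤ) * Polynomial.X)) :=
  stmt_4_general a b
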